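/- For n ≥ 3 and any Möbius transformation g, the A-series higher Schwarzian transforms as σ_n^A[f ∘ g] = (σ_n^A[f] ∘ g)·(g')^{n-1}. -/

import Mathlib

/-!
The pre-Schwarzian `P f = f'' / f'` satisfies the cocycle rule `P (f ∘ g) = (P f ∘ g) g' + P g`,
which yields `S (f ∘ g) = (S f ∘ g) g'^2 + S g`; for a Möbius map `P g = -2c / (cz + d)` and
`S g = 0`. Write `σ_k` for `sigmaA · k` (the paper's `σ_{k+3}`). If
`σ_k (f ∘ g) = (σ_k f ∘ g) g'^(k+2)`, differentiating produces the extra term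
`(k+2) (σ_k f ∘ g) g'^(k+1) g''`, which is cancelled exactly by the `P g = g''/g'` part of the
correction `(k+2) P (f ∘ g) σ_k (f ∘ g)`. So the law propagates along the recursion for every `g`
with `g' ≠ 0`, and `S g = 0` is needed only to start it.
-/

noncomputable def schwarzian (f : ℂ → ℂ) : ℂ → ℂ := fun z =>
  deriv (fun w => deriv (deriv f) w / deriv f w) z
    - (1/2) * (deriv (deriv f) z / deriv f z) ^ 2

noncomputable def sigmaA (f : ℂ → ℂ) : ℕ → ℂ → ℂ
  | 0 => schwarzian f
  | (k+1) => fun z =>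
      deriv (sigmaA f k) z
        - ((k : ℂ) + 2) * (deriv (deriv f) z / deriv f z) * sigmaA f k z

open Set

noncomputable def preSchwarzian (f : ℂ → ℂ) (z : ℂ) : ℂ :=
  deriv (deriv f) z / deriv f z

lemma schwarzian_eq_preSchwarzian (f : ℂ → ℂ) (z : ℂ) :
    schwarzian f z = deriv (preSchwarzian f) z - 1 / 2 * preSchwarzian f z ^ 2 := rfl

lemma sigmaA_zero (f : ℂ → ℂ) : sigmaA f 0 = schwarzian f := rfl

lemma sigmaA_succ (f : ℂ → ℂ) (k : ℕ) (z : ℂ) :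
    sigmaA f (k + 1) z
      = deriv (sigmaA f k) z - ((k : ℂ) + 2) * preSchwarzian f z * sigmaA f k z := rfl

section Analytic

variable {f : ℂ → ℂ} {D : Set ℂ}

lemma AnalyticOnNhd.preSchwarzian (hf : AnalyticOnNhd ℂ f D) (hf' : ∀ z ∈ D, deriv f z ≠ 0) :
    AnalyticOnNhd ℂ (preSchwarzian f) D :=
  hf.deriv.deriv.div hf.deriv hf'

lemma AnalyticOnNhd.sigmaA (hf : AnalyticOnNhd ℂ f D) (hf' : ∀ z ∈ D, deriv f z ≠ 0) (k : ℕ) :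
    AnalyticOnNhd ℂ (sigmaA f k) D := by
  have hP := hf.preSchwarzian hf'
  induction k with
  | zero => exact hP.deriv.sub (analyticOnNhd_const.mul (hP.pow 2))
  | succ k ih => exact ih.deriv.sub ((analyticOnNhd_const.mul hP).mul ih)

end Analytic

section Composition

variable {f g : ℂ → ℂ} {D U : Set ℂ}

lemma eqOn_deriv_comp (hf : AnalyticOnNhd ℂ f D) (hg : AnalyticOnNhd ℂ g U) (hgUD : MapsTo g U D) :
    EqOn (deriv (f ∘ g)) (fun w => deriv f (g w) * deriv g w) U := fun z hz =>
  deriv_comp z (hf _ (hgUD hz)).differentiableAt (hg z hz).differentiableAt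

lemma deriv_deriv_comp (hU : IsOpen U) (hf : AnalyticOnNhd ℂ f D) (hg : AnalyticOnNhd ℂ g U)
    (hgUD : MapsTo g U D) {z : ℂ} (hz : z ∈ U) :
    deriv (deriv (f ∘ g)) z
      = deriv (deriv f) (g z) * deriv g z ^ 2 + deriv f (g z) * deriv (deriv g) z := by
  have hf'g : DifferentiableAt ℂ (deriv f) (g z) := (hf.deriv _ (hgUD hz)).differentiableAt
  have hgz : DifferentiableAt ℂ g z := (hg z hz).differentiableAt
  have hf'gz : DifferentiableAt ℂ (fun w => deriv f (g w)) z := hf'g.comp z hgz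
  have hchain : deriv (fun w => deriv f (g w)) z = deriv (deriv f) (g z) * deriv g z :=
    deriv_comp z hf'g hgz
  rw [(eqOn_deriv_comp hf hg hgUD).deriv hU hz,
    deriv_fun_mul hf'gz (hg.deriv z hz).differentiableAt, hchain]
  ring

lemma eqOn_preSchwarzian_comp (hU : IsOpen U) (hf : AnalyticOnNhd ℂ f D)
    (hf' : ∀ z ∈ D, deriv f z ≠ 0) (hg : AnalyticOnNhd ℂ g U) (hg' : ∀ z ∈ U, deriv g z ≠ 0)
    (hgUD : MapsTo g U D) :
    EqOn (preSchwarzian (f ∘ g)) (fun w => preSchwarzian f (g w) * deriv g w + preSchwarzian g w)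
      U := by
  intro z hz
  have hf'z := hf' _ (hgUD hz)
  have hg'z := hg' z hz
  simp only [preSchwarzian]
  rw [deriv_deriv_comp hU hf hg hgUD hz, eqOn_deriv_comp hf hg hgUD hz]
  field_simp

lemma eqOn_schwarzian_comp (hU : IsOpen U) (hf : AnalyticOnNhd ℂ f D)
    (hf' : ∀ z ∈ D, deriv f z ≠ 0) (hg : AnalyticOnNhd ℂ g U) (hg' : ∀ z ∈ U, deriv g z ≠ 0)
    (hgUD : MapsTo g U D) :
    EqOn (schwarzian (f ∘ g)) (fun w => schwarzian f (g w) * deriv g w ^ 2 + schwarzian g w) U := by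
  intro z hz
  have hPf := (hf.preSchwarzian hf' _ (hgUD hz)).differentiableAt
  have hgz := (hg z hz).differentiableAt
  have hP_g : preSchwarzian g z = deriv (deriv g) z / deriv g z := rfl
  have hPfg : DifferentiableAt ℂ (fun w => preSchwarzian f (g w)) z := hPf.comp z hgz
  have hchain : deriv (fun w => preSchwarzian f (g w)) z
      = deriv (preSchwarzian f) (g z) * deriv g z :=
    deriv_comp z hPf hgz
  simp only [schwarzian_eq_preSchwarzian]
  rw [(eqOn_preSchwarzian_comp hU hf hf' hg hg' hgUD).deriv hU hz,
    eqOn_preSchwarzian_comp hU hf hf' hg hg' hgUD hz,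
    deriv_fun_add (hPfg.fun_mul (hg.deriv z hz).differentiableAt)
      (hg.preSchwarzian hg' z hz).differentiableAt,
    deriv_fun_mul hPfg (hg.deriv z hz).differentiableAt, hchain]
  dsimp only
  rw [hP_g]
  field_simp [hg' z hz]
  ring

lemma eqOn_sigmaA_comp_of_schwarzian_eq_zero (hU : IsOpen U)
    (hf : AnalyticOnNhd ℂ f D) (hf' : ∀ z ∈ D, deriv f z ≠ 0) (hg : AnalyticOnNhd ℂ g U)
    (hg' : ∀ z ∈ U, deriv g z ≠ 0) (hgUD : MapsTo g U D) (hS : EqOn (schwarzian g) 0 U) (k : ℕ) :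
    EqOn (sigmaA (f ∘ g) k) (fun w => sigmaA f k (g w) * deriv g w ^ (k + 2)) U := by
  induction k with
  | zero =>
    intro z hz
    have hSz : schwarzian g z = 0 := hS hz
    simp [sigmaA_zero, eqOn_schwarzian_comp hU hf hf' hg hg' hgUD hz, hSz]
  | succ k ih =>
    intro z hz
    dsimp only
    have hgz := (hg z hz).differentiableAt
    have hg'z := (hg.deriv z hz).differentiableAt
    have hσ := (hf.sigmaA hf' k _ (hgUD hz)).differentiableAt
    have hσg : DifferentiableAt ℂ (fun w => sigmaA f k (g w)) z := hσ.comp z hgz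
    have hchain : deriv (fun w => sigmaA f k (g w)) z = deriv (sigmaA f k) (g z) * deriv g z :=
      deriv_comp z hσ hgz
    have hP_g : preSchwarzian g z = deriv (deriv g) z / deriv g z := rfl
    rw [sigmaA_succ, sigmaA_succ, ih.deriv hU hz, ih hz,
      eqOn_preSchwarzian_comp hU hf hf' hg hg' hgUD hz]
    dsimp only
    rw [hP_g, deriv_fun_mul hσg (hg'z.fun_pow _), deriv_fun_pow hg'z, hchain]
    field_simp [hg' z hz]
    push_cast
    ring

end Composition

noncomputable def mobius (a b c d : ℂ) (z : ℂ) : ℂ :=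
  (a * z + b) / (c * z + d)

section Mobius

variable {a b c d : ℂ}

lemma hasDerivAt_affine (u v z : ℂ) : HasDerivAt (fun w => u * w + v) u z := by
  simpa using ((hasDerivAt_id z).const_mul u).add_const v

lemma isOpen_setOf_affine_ne_zero (c d : ℂ) : IsOpen {z : ℂ | c * z + d ≠ 0} :=
  isOpen_ne_fun (by fun_prop) continuous_const

lemma hasDerivAt_mobius {z : ℂ} (hz : c * z + d ≠ 0) :
    HasDerivAt (mobius a b c d) ((a * d - b * c) / (c * z + d) ^ 2) z :=
  ((hasDerivAt_affine a b z).fun_div (hasDerivAt_affine c d z) hz).congr_deriv (by ring)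

lemma analyticOnNhd_mobius : AnalyticOnNhd ℂ (mobius a b c d) {z | c * z + d ≠ 0} :=
  DifferentiableOn.analyticOnNhd
    (fun _ hz => (hasDerivAt_mobius hz).differentiableAt.differentiableWithinAt)
    (isOpen_setOf_affine_ne_zero c d)

lemma eqOn_deriv_mobius :
    EqOn (deriv (mobius a b c d)) (fun z => (a * d - b * c) / (c * z + d) ^ 2)
      {z | c * z + d ≠ 0} :=
  fun _ hz => (hasDerivAt_mobius hz).deriv

lemma eqOn_preSchwarzian_mobius (had : a * d - b * c ≠ 0) :
    EqOn (preSchwarzian (mobius a b c d)) (fun z => -2 * c / (c * z + d)) {z | c * z + d ≠ 0} := by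
  intro z (hz : c * z + d ≠ 0)
  have hsq : HasDerivAt (fun w => (c * w + d) ^ 2) (2 * (c * z + d) * c) z := by
    simpa using (hasDerivAt_affine c d z).fun_pow 2
  have h := (hasDerivAt_const z (a * d - b * c)).fun_div hsq (pow_ne_zero 2 hz)
  rw [preSchwarzian, eqOn_deriv_mobius.deriv (isOpen_setOf_affine_ne_zero c d) hz, h.deriv,
    eqOn_deriv_mobius hz]
  generalize a * d - b * c = δ at had ⊢
  field_simp
  ring

lemma eqOn_schwarzian_mobius (had : a * d - b * c ≠ 0) :
    EqOn (schwarzian (mobius a b c d)) 0 {z | c * z + d ≠ 0} := by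
  intro z (hz : c * z + d ≠ 0)
  have h := (hasDerivAt_const z (-2 * c)).fun_div (hasDerivAt_affine c d z) hz
  rw [Pi.zero_apply, schwarzian_eq_preSchwarzian,
    (eqOn_preSchwarzian_mobius had).deriv (isOpen_setOf_affine_ne_zero c d) hz, h.deriv,
    eqOn_preSchwarzian_mobius had hz]
  field_simp
  ring

end Mobius

/-- For `n ≥ 3` and a Möbius transformation `g`, the A-series higher Schwarzian
transforms as `σ_n^A[f ∘ g] = (σ_n^A[f] ∘ g)·(g')^{n-1}`. -/
theorem sigmaA_comp_mobius (a b c d : ℂ) (habcd : a * d - b * c = 1)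
    (g : ℂ → ℂ) (hgdef : ∀ z, g z = (a * z + b) / (c * z + d))
    (D U : Set ℂ) (hD : IsOpen D) (hU : IsOpen U)
    (f : ℂ → ℂ) (hf : DifferentiableOn ℂ f D) (hf' : ∀ z ∈ D, deriv f z ≠ 0)
    (hUden : ∀ z ∈ U, c * z + d ≠ 0) (hUD : ∀ z ∈ U, g z ∈ D) :
    ∀ n : ℕ, 3 ≤ n → ∀ z ∈ U,
      sigmaA (f ∘ g) (n - 3) z
        = sigmaA f (n - 3) (g z) * (deriv g z) ^ (n - 1) := by
  obtain rfl : g = mobius a b c d := funext hgdef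
  have had : a * d - b * c ≠ 0 := habcd ▸ one_ne_zero
  have hg' : ∀ z ∈ U, deriv (mobius a b c d) z ≠ 0 := fun z hz => by
    rw [eqOn_deriv_mobius (hUden z hz)]
    exact div_ne_zero had (pow_ne_zero 2 (hUden z hz))
  intro n hn z hz
  obtain ⟨k, rfl⟩ : ∃ k, n = k + 3 := ⟨n - 3, by omega⟩
  simpa using eqOn_sigmaA_comp_of_schwarzian_eq_zero hU (hf.analyticOnNhd hD) hf'
    (analyticOnNhd_mobius.mono hUden) hg' hUD ((eqOn_schwarzian_mobius had).mono hUden) k hz
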